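/- (Lemma 4.1: L²-bound for periodic factor times Steklov average). Let b ∈ L²_per(□) be a 1-periodic function, b_ε(x) = b(x/ε), and φ ∈ L²(ℝ^d). Then b_ε S^ε φ ∈ L²(ℝ^d) and ‖b_ε S^ε φ‖²_{L²(ℝ^d)} ≤ ⟨b²⟩ ‖φ‖²_{L²(ℝ^d)}. -/

import Mathlib

/-
Common setup for homogenization of -div(a(x/ε)∇) + 1 on ℝ^d, following
S. E. Pastukhova, "On resolvent approximations of elliptic differential
operators with periodic coefficients".
-/

open MeasureTheory Matrix Finset

noncomputable section

/-- The unit cube `□ = [-1/2, 1/2)^d` in `ℝ^d`. -/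
def cube (d : ℕ) : Set (Fin d → ℝ) :=
  {y | ∀ i, y i ∈ Set.Ico (-(1 / 2 : ℝ)) (1 / 2 : ℝ)}

/-- `1`-periodicity (in each coordinate) of a scalar function on `ℝ^d`. -/
def IsPeriodic {d : ℕ} (f : (Fin d → ℝ) → ℝ) : Prop :=
  ∀ (y : Fin d → ℝ) (k : Fin d → ℤ), f (y + fun i => (k i : ℝ)) = f y

/-- `1`-periodicity of a vector-valued function on `ℝ^d`. -/
def IsPeriodicV {d : ℕ} (f : (Fin d → ℝ) → Fin d → ℝ) : Prop :=
  ∀ (y : Fin d → ℝ) (k : Fin d → ℤ), f (y + fun i => (k i : ℝ)) = f y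

/-- `1`-periodicity of a matrix-valued function on `ℝ^d`. -/
def IsPeriodicM {d : ℕ} (a : (Fin d → ℝ) → Matrix (Fin d) (Fin d) ℝ) : Prop :=
  ∀ (y : Fin d → ℝ) (k : Fin d → ℤ), a (y + fun i => (k i : ℝ)) = a y

/-- The gradient (vector of partial derivatives) of a function on `ℝ^d`. -/
def grad {d : ℕ} (φ : (Fin d → ℝ) → ℝ) (x : Fin d → ℝ) : Fin d → ℝ :=
  fun i => fderiv ℝ φ x (Pi.single i 1)

/-- Smooth compactly supported test functions. -/
def IsTest {d : ℕ} (φ : (Fin d → ℝ) → ℝ) : Prop :=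
  ContDiff ℝ (⊤ : ℕ∞) φ ∧ HasCompactSupport φ

/-- `g` is the distributional (weak) gradient of `u` on `ℝ^d`. -/
def IsWeakGrad {d : ℕ} (u : (Fin d → ℝ) → ℝ) (g : (Fin d → ℝ) → Fin d → ℝ) : Prop :=
  ∀ φ : (Fin d → ℝ) → ℝ, IsTest φ →
    ∀ i, ∫ x, u x * grad φ x i = - ∫ x, g x i * φ x

/-- The `L²(ℝ^d)` norm of a scalar function. -/
def L2norm {d : ℕ} (u : (Fin d → ℝ) → ℝ) : ℝ := Real.sqrt (∫ x, (u x) ^ 2)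

/-- The `L²(ℝ^d)` norm of a vector field (with the Euclidean norm on `ℝ^d`). -/
def L2vnorm {d : ℕ} (g : (Fin d → ℝ) → Fin d → ℝ) : ℝ :=
  Real.sqrt (∫ x, ∑ i, (g x i) ^ 2)

/-- The Steklov smoothing operator `S^ε φ(x) = ∫_□ φ(x - εω) dω`. -/
def steklov {d : ℕ} (ε : ℝ) (φ : (Fin d → ℝ) → ℝ) (x : Fin d → ℝ) : ℝ :=
  ∫ ω in cube d, φ (x - ε • ω)

/-- `M` is a `BMO` bound for `g`: on every ball, the mean oscillation of `g` is `≤ M`. -/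
def BMOBound {d : ℕ} (g : (Fin d → ℝ) → ℝ) (M : ℝ) : Prop :=
  ∀ (x : Fin d → ℝ) (r : ℝ), 0 < r →
    ⨍ y in Metric.ball x r, |g y - ⨍ z in Metric.ball x r, g z| ≤ M
/-! ### Auxiliary lemmas for Lemma 4.1 -/

section Aux

open Set Function
open scoped ENNReal NNReal

variable {d : ℕ}

lemma cube_eq (d : ℕ) :
    cube d = Set.pi Set.univ fun _ : Fin d => Set.Ico (-(1 / 2 : ℝ)) (1 / 2 : ℝ) := by
  ext y; simp [cube, Set.mem_pi]

lemma measurableSet_cube (d : ℕ) : MeasurableSet (cube d) := by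
  rw [cube_eq]; exact MeasurableSet.univ_pi fun _ => measurableSet_Ico

lemma volume_cube (d : ℕ) : volume (cube d) = 1 := by
  rw [cube_eq, volume_pi_pi]
  simp [Real.volume_Ico]
  norm_num

/-- The integer lattice in `ℝ^d` as the ℤ-span of the standard basis. -/
abbrev latt (d : ℕ) : Submodule ℤ (Fin d → ℝ) :=
  Submodule.span ℤ (Set.range (Pi.basisFun ℝ (Fin d)))

lemma latt_exists_int {v : Fin d → ℝ} (hv : v ∈ latt d) :
    ∃ k : Fin d → ℤ, v = fun i => (k i : ℝ) := by
  induction hv using Submodule.span_induction with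
  | mem x hx =>
      obtain ⟨i, rfl⟩ := hx
      exact ⟨Pi.single i 1, by
        ext j
        by_cases h : j = i <;> simp [Pi.basisFun_apply, Pi.single_apply, h]⟩
  | zero => exact ⟨0, by ext j; simp⟩
  | add x y _ _ hx hy =>
      obtain ⟨k, rfl⟩ := hx; obtain ⟨l, rfl⟩ := hy
      exact ⟨k + l, by ext j; simp⟩
  | smul z x _ hx =>
      obtain ⟨k, rfl⟩ := hx
      exact ⟨z • k, by ext j; simp⟩

lemma fund_translate (t : Fin d → ℝ) :
    MeasureTheory.IsAddFundamentalDomain (latt d).toAddSubgroup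
      ((fun ω => t + ω) '' cube d) (volume : Measure (Fin d → ℝ)) := by
  have h0 := ZSpan.isAddFundamentalDomain' (Pi.basisFun ℝ (Fin d))
    (volume : Measure (Fin d → ℝ))
  have himg :
      (fun ω => t + ω) '' cube d
        = (Equiv.addLeft (t - fun _ : Fin d => (1 / 2 : ℝ))) ''
            (ZSpan.fundamentalDomain (Pi.basisFun ℝ (Fin d))) := by
    ext x
    constructor
    · rintro ⟨ω, hω, rfl⟩
      refine ⟨ω + fun _ => (1 / 2 : ℝ), ?_, ?_⟩
      · intro i
        have := hω i
        simp only [Set.mem_Ico] at this ⊢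
        simp only [Pi.basisFun_repr, Pi.add_apply]
        constructor <;> [linarith [this.1]; linarith [this.2]]
      · simp only [Equiv.coe_addLeft]
        abel
    · rintro ⟨y, hy, rfl⟩
      refine ⟨(fun _ => -(1 / 2 : ℝ)) + y, fun i => ?_, ?_⟩
      · have := hy i
        simp only [Pi.basisFun_repr, Set.mem_Ico] at this
        simp only [Pi.add_apply, Set.mem_Ico]
        constructor <;> [linarith [this.1]; linarith [this.2]]
      · simp only [Equiv.coe_addLeft]
        ext i
        simp only [Pi.add_apply, Pi.sub_apply, Pi.neg_apply]
        ring
  rw [himg]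
  refine h0.image_of_equiv (Equiv.addLeft _) ?_ (Equiv.refl _) ?_
  · exact (measurePreserving_add_left volume _).quasiMeasurePreserving
  · intro g x
    show (t - fun _ : Fin d => (1 / 2 : ℝ)) + ((g : Fin d → ℝ) + x)
        = (g : Fin d → ℝ) + ((t - fun _ : Fin d => (1 / 2 : ℝ)) + x)
    abel

lemma fund_cube (d : ℕ) :
    MeasureTheory.IsAddFundamentalDomain (latt d).toAddSubgroup
      (cube d) (volume : Measure (Fin d → ℝ)) := by
  have := fund_translate (d := d) 0
  simpa using this

/-- Translation invariance of the integral over the unit cube for a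
ℤᵈ-periodic `ℝ≥0∞`-valued function. -/
lemma lintegral_cube_translate {f : (Fin d → ℝ) → ℝ≥0∞} (hf : Measurable f)
    (hper : ∀ (k : Fin d → ℤ) (x : Fin d → ℝ), f ((fun i => (k i : ℝ)) + x) = f x)
    (t : Fin d → ℝ) :
    ∫⁻ ω in cube d, f (t + ω) = ∫⁻ ω in cube d, f ω := by
  have : Countable (latt d).toAddSubgroup := (inferInstance : Countable (latt d))
  have hinv : ∀ (g : (latt d).toAddSubgroup) (x : Fin d → ℝ), f (g +ᵥ x) = f x := by
    rintro ⟨v, hv⟩ x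
    obtain ⟨k, rfl⟩ := latt_exists_int hv
    exact hper k x
  have hemb : MeasurableEmbedding (fun ω : Fin d → ℝ => t + ω) :=
    (MeasurableEquiv.addLeft t).measurableEmbedding
  have h1 : ∫⁻ ω in cube d, f (t + ω)
      = ∫⁻ x in (fun ω => t + ω) '' cube d, f x :=
    (measurePreserving_add_left volume t).setLIntegral_comp_emb hemb f (cube d)
  rw [h1]
  exact (fund_translate t).setLIntegral_eq (fund_cube d) f hinv

/-- Jensen/Cauchy–Schwarz: square of the integral over the unit cube is at most
the integral of the square. -/
lemma sq_lintegral_cube_le (h : (Fin d → ℝ) → ℝ≥0∞)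
    (hh : AEMeasurable h (volume.restrict (cube d))) :
    (∫⁻ ω in cube d, h ω) ^ 2 ≤ ∫⁻ ω in cube d, (h ω) ^ 2 := by
  have hpq : Real.HolderConjugate 2 2 := Real.HolderConjugate.two_two
  have H := ENNReal.lintegral_mul_le_Lp_mul_Lq (volume.restrict (cube d)) hpq hh
    (aemeasurable_const (b := (1 : ℝ≥0∞)))
  simp only [Pi.mul_apply, mul_one, ENNReal.one_rpow] at H
  rw [MeasureTheory.lintegral_const, Measure.restrict_apply_univ, volume_cube] at H
  have H2 : ∫⁻ ω in cube d, h ω ≤ (∫⁻ ω in cube d, h ω ^ (2 : ℝ)) ^ (1 / (2:ℝ)) := by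
    simpa using H
  calc (∫⁻ ω in cube d, h ω) ^ 2
      ≤ ((∫⁻ ω in cube d, h ω ^ (2 : ℝ)) ^ (1 / (2:ℝ))) ^ 2 := by
        exact pow_le_pow_left' H2 2
    _ = ∫⁻ ω in cube d, h ω ^ (2 : ℝ) := by
        rw [← ENNReal.rpow_natCast _ 2, ← ENNReal.rpow_mul]
        norm_num
    _ = ∫⁻ ω in cube d, (h ω) ^ 2 := by
        congr 1; funext ω
        rw [← ENNReal.rpow_natCast (h ω) 2]; norm_num

end Aux

section Key

open Set Function
open scoped ENNReal NNReal

variable {d : ℕ}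

/-- The key exact identity behind Lemma 4.1, at the level of `ℝ≥0∞`-valued integrals. -/
lemma steklov_key_identity {ε : ℝ} (hε : ε ≠ 0)
    (B F : (Fin d → ℝ) → ℝ≥0∞) (hB : Measurable B) (hF : Measurable F)
    (hper : ∀ (k : Fin d → ℤ) (x : Fin d → ℝ), B ((fun i => (k i : ℝ)) + x) = B x) :
    ∫⁻ x, B (ε⁻¹ • x) * ∫⁻ ω in cube d, F (x - ε • ω)
      = (∫⁻ y in cube d, B y) * ∫⁻ x, F x := by
  have hBs : Measurable fun x : Fin d → ℝ => B (ε⁻¹ • x) :=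
    hB.comp (measurable_const_smul _)
  have hsub : Measurable fun p : (Fin d → ℝ) × (Fin d → ℝ) => p.1 - ε • p.2 :=
    measurable_fst.sub (measurable_snd.const_smul ε)
  have hG : Measurable fun p : (Fin d → ℝ) × (Fin d → ℝ) =>
      B (ε⁻¹ • p.1) * F (p.1 - ε • p.2) :=
    ((hB.comp (measurable_fst.const_smul ε⁻¹)).mul (hF.comp hsub))
  calc
    ∫⁻ x, B (ε⁻¹ • x) * ∫⁻ ω in cube d, F (x - ε • ω)
        = ∫⁻ x, ∫⁻ ω in cube d, B (ε⁻¹ • x) * F (x - ε • ω) := by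
          refine lintegral_congr fun x => ?_
          exact (lintegral_const_mul _ (hF.comp (measurable_const.sub
            (measurable_id.const_smul ε)))).symm
    _ = ∫⁻ ω in cube d, ∫⁻ x, B (ε⁻¹ • x) * F (x - ε • ω) := by
          exact lintegral_lintegral_swap hG.aemeasurable
    _ = ∫⁻ ω in cube d, ∫⁻ x, B (ε⁻¹ • x + ω) * F x := by
          refine setLIntegral_congr_fun (measurableSet_cube d) (
            fun ω _ => ?_)
          have := lintegral_add_right_eq_self
            (μ := (volume : Measure (Fin d → ℝ)))
            (fun x => B (ε⁻¹ • x) * F (x - ε • ω)) (ε • ω)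
          rw [← this]
          refine lintegral_congr fun x => ?_
          have h1 : ε⁻¹ • (x + ε • ω) = ε⁻¹ • x + ω := by
            rw [smul_add, smul_smul, inv_mul_cancel₀ hε, one_smul]
          have h2 : x + ε • ω - ε • ω = x := by abel
          rw [h1, h2]
    _ = ∫⁻ x, ∫⁻ ω in cube d, B (ε⁻¹ • x + ω) * F x := by
          refine (lintegral_lintegral_swap ?_).symm
          exact ((hB.comp ((measurable_fst.const_smul ε⁻¹).add measurable_snd)).mul
            (hF.comp measurable_fst)).aemeasurable
    _ = ∫⁻ x, (∫⁻ ω in cube d, B (ε⁻¹ • x + ω)) * F x := by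
          refine lintegral_congr fun x => ?_
          exact lintegral_mul_const _ (hB.comp (measurable_const.add measurable_id))
    _ = ∫⁻ x, (∫⁻ y in cube d, B y) * F x := by
          refine lintegral_congr fun x => ?_
          rw [lintegral_cube_translate hB hper (ε⁻¹ • x)]
    _ = (∫⁻ y in cube d, B y) * ∫⁻ x, F x := lintegral_const_mul _ hF

end Key

open scoped ENNReal NNReal

/-- **Lemma 4.1** (L²-bound for a periodic factor times a Steklov average).
If `b ∈ L²_per(□)`, `b_ε(x) = b(x/ε)` and `φ ∈ L²(ℝ^d)`, then
`‖b_ε S^ε φ‖²_{L²} ≤ ⟨b²⟩ ‖φ‖²_{L²}`. -/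
theorem periodic_times_steklov_L2_bound
    (d : ℕ) (hd : 2 ≤ d) (ε : ℝ) (hε0 : 0 < ε) (hε1 : ε < 1)
    (b : (Fin d → ℝ) → ℝ) (hb_meas : Measurable b) (hb_per : IsPeriodic b)
    (hb : MemLp b 2 (volume.restrict (cube d)))
    (φ : (Fin d → ℝ) → ℝ) (hφ : MemLp φ 2 volume) :
    MemLp (fun x => b (ε⁻¹ • x) * steklov ε φ x) 2 volume ∧
    ∫ x, (b (ε⁻¹ • x) * steklov ε φ x) ^ 2
      ≤ (∫ y in cube d, (b y) ^ 2) * ∫ x, (φ x) ^ 2 := by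
  have hεne : ε ≠ 0 := hε0.ne'
  -- a measurable representative of `φ`
  obtain ⟨φ', hφ'sm, hφeq⟩ : ∃ φ', StronglyMeasurable φ' ∧ φ =ᵐ[volume] φ' :=
    ⟨hφ.1.mk φ, hφ.1.stronglyMeasurable_mk, hφ.1.ae_eq_mk⟩
  have hφ'm : Measurable φ' := hφ'sm.measurable
  -- the Steklov average does not change when replacing `φ` by `φ'`
  have hqmp : ∀ x : Fin d → ℝ,
      Measure.QuasiMeasurePreserving (fun ω : Fin d → ℝ => x - ε • ω) volume volume := by
    intro x
    have h1 : Measure.QuasiMeasurePreserving (fun ω : Fin d → ℝ => ε • ω) volume volume :=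
      Measure.quasiMeasurePreserving_smul volume hεne
    have h2 : MeasurePreserving (fun u : Fin d → ℝ => x - u) volume volume :=
      Measure.measurePreserving_sub_left volume x
    exact h2.quasiMeasurePreserving.comp h1
  have hstek : ∀ x, steklov ε φ x = steklov ε φ' x := by
    intro x
    exact integral_congr_ae (ae_restrict_of_ae ((hqmp x).ae_eq hφeq))
  -- strong measurability of the Steklov average
  have hSm : StronglyMeasurable (steklov ε φ') := by
    have h1 : StronglyMeasurable
        (Function.uncurry fun (x ω : Fin d → ℝ) => φ' (x - ε • ω)) :=
      hφ'sm.comp_measurable (measurable_fst.sub (measurable_snd.const_smul ε))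
    exact h1.integral_prod_right'
  -- the `ℝ≥0∞`-valued squares
  set B : (Fin d → ℝ) → ℝ≥0∞ := fun y => (‖b y‖₊ : ℝ≥0∞) ^ 2 with hBdef
  set F : (Fin d → ℝ) → ℝ≥0∞ := fun y => (‖φ' y‖₊ : ℝ≥0∞) ^ 2 with hFdef
  have hBm : Measurable B := (hb_meas.nnnorm.coe_nnreal_ennreal).pow_const 2
  have hFm : Measurable F := (hφ'm.nnnorm.coe_nnreal_ennreal).pow_const 2
  have hBper : ∀ (k : Fin d → ℤ) (x : Fin d → ℝ), B ((fun i => (k i : ℝ)) + x) = B x := by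
    intro k x
    have h : ((fun i => (k i : ℝ)) + x) = x + fun i => (k i : ℝ) := add_comm _ _
    simp only [hBdef, h, hb_per x k]
  -- pointwise Jensen bound for the Steklov average
  have hpt : ∀ x, (‖steklov ε φ' x‖₊ : ℝ≥0∞) ^ 2 ≤ ∫⁻ ω in cube d, F (x - ε • ω) := by
    intro x
    have h1 : (‖steklov ε φ' x‖₊ : ℝ≥0∞) ≤ ∫⁻ ω in cube d, (‖φ' (x - ε • ω)‖₊ : ℝ≥0∞) :=
      enorm_integral_le_lintegral_enorm _
    have h2 := sq_lintegral_cube_le (fun ω => (‖φ' (x - ε • ω)‖₊ : ℝ≥0∞))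
      ((hφ'm.comp (measurable_const.sub
        (measurable_id.const_smul ε))).nnnorm.coe_nnreal_ennreal).aemeasurable
    exact le_trans (pow_le_pow_left' h1 2) h2
  -- the main estimate at the `ℝ≥0∞` level
  have hkey := steklov_key_identity hεne B F hBm hFm hBper
  have hmain : ∫⁻ x, B (ε⁻¹ • x) * (‖steklov ε φ' x‖₊ : ℝ≥0∞) ^ 2
      ≤ (∫⁻ y in cube d, B y) * ∫⁻ x, F x := by
    rw [← hkey]
    exact lintegral_mono fun x => mul_le_mul_right (hpt x) _
  -- integrability facts
  have hb2 : Integrable (fun y => b y ^ 2) (volume.restrict (cube d)) :=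
    (memLp_two_iff_integrable_sq hb.1).mp hb
  have hφ'2 : MemLp φ' 2 volume := hφ.ae_eq hφeq
  have hφ2 : Integrable (fun y => φ' y ^ 2) volume :=
    (memLp_two_iff_integrable_sq hφ'sm.aestronglyMeasurable).mp hφ'2
  have hBofReal : ∀ y, (‖b y ^ 2‖₊ : ℝ≥0∞) = B y := by
    intro y
    simp [hBdef, nnnorm_pow]
  have hFofReal : ∀ y, (‖φ' y ^ 2‖₊ : ℝ≥0∞) = F y := by
    intro y
    simp [hFdef, nnnorm_pow]
  have hBfin : ∫⁻ y in cube d, B y ≠ ∞ := by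
    have h := hb2.2
    rw [HasFiniteIntegral] at h
    refine ne_of_lt ?_
    calc ∫⁻ y in cube d, B y = ∫⁻ y in cube d, (‖b y ^ 2‖₊ : ℝ≥0∞) :=
          lintegral_congr fun y => (hBofReal y).symm
      _ < ∞ := h
  have hFfin : ∫⁻ x, F x ≠ ∞ := by
    have h := hφ2.2
    rw [HasFiniteIntegral] at h
    refine ne_of_lt ?_
    calc ∫⁻ x, F x = ∫⁻ x, (‖φ' x ^ 2‖₊ : ℝ≥0∞) :=
          lintegral_congr fun x => (hFofReal x).symm
      _ < ∞ := h
  -- measurability of the product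
  have hfm : AEStronglyMeasurable (fun x => b (ε⁻¹ • x) * steklov ε φ' x) volume :=
    ((hb_meas.comp (measurable_const_smul ε⁻¹)).mul hSm.measurable).aestronglyMeasurable
  have hfm2 : AEStronglyMeasurable (fun x => (b (ε⁻¹ • x) * steklov ε φ' x) ^ 2) volume := by
    exact hfm.pow 2
  have hnnf : ∀ x, (‖(b (ε⁻¹ • x) * steklov ε φ' x) ^ 2‖₊ : ℝ≥0∞)
      = B (ε⁻¹ • x) * (‖steklov ε φ' x‖₊ : ℝ≥0∞) ^ 2 := by
    intro x
    simp [hBdef, nnnorm_pow, nnnorm_mul, mul_pow]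
  -- integrability of the square
  have hint2 : Integrable (fun x => (b (ε⁻¹ • x) * steklov ε φ' x) ^ 2) volume := by
    refine ⟨hfm2, ?_⟩
    rw [HasFiniteIntegral]
    calc ∫⁻ x, (‖(b (ε⁻¹ • x) * steklov ε φ' x) ^ 2‖₊ : ℝ≥0∞)
        = ∫⁻ x, B (ε⁻¹ • x) * (‖steklov ε φ' x‖₊ : ℝ≥0∞) ^ 2 :=
          lintegral_congr fun x => hnnf x
      _ ≤ (∫⁻ y in cube d, B y) * ∫⁻ x, F x := hmain
      _ < ∞ := ENNReal.mul_lt_top hBfin.lt_top hFfin.lt_top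
  have hmem : MemLp (fun x => b (ε⁻¹ • x) * steklov ε φ' x) 2 volume :=
    (memLp_two_iff_integrable_sq hfm).mpr hint2
  -- conversion of the three integrals
  have hLHS : ∫ x, (b (ε⁻¹ • x) * steklov ε φ' x) ^ 2
      = (∫⁻ x, B (ε⁻¹ • x) * (‖steklov ε φ' x‖₊ : ℝ≥0∞) ^ 2).toReal := by
    rw [integral_eq_lintegral_of_nonneg_ae
      (Filter.Eventually.of_forall fun x => sq_nonneg _) hfm2]
    congr 1
    refine lintegral_congr fun x => ?_
    rw [← hnnf x, ← Real.enorm_eq_ofReal (sq_nonneg _), enorm_eq_nnnorm]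
  have hRHSb : ∫ y in cube d, b y ^ 2 = (∫⁻ y in cube d, B y).toReal := by
    rw [integral_eq_lintegral_of_nonneg_ae
      (Filter.Eventually.of_forall fun y => sq_nonneg _) hb2.1]
    congr 1
    refine lintegral_congr fun y => ?_
    rw [← hBofReal y, ← Real.enorm_eq_ofReal (sq_nonneg _), enorm_eq_nnnorm]
  have hφeq2 : (fun x => φ x ^ 2) =ᵐ[volume] fun x => φ' x ^ 2 :=
    hφeq.mono fun x hx => by simp only [hx]
  have hRHSφ : ∫ x, φ x ^ 2 = (∫⁻ x, F x).toReal := by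
    rw [integral_congr_ae hφeq2, integral_eq_lintegral_of_nonneg_ae
      (Filter.Eventually.of_forall fun x => sq_nonneg _) hφ2.1]
    congr 1
    refine lintegral_congr fun x => ?_
    rw [← hFofReal x, ← Real.enorm_eq_ofReal (sq_nonneg _), enorm_eq_nnnorm]
  constructor
  · have : (fun x => b (ε⁻¹ • x) * steklov ε φ x)
        = fun x => b (ε⁻¹ • x) * steklov ε φ' x := by
      funext x; rw [hstek x]
    rw [this]
    exact hmem
  · simp only [hstek]
    rw [hLHS, hRHSb, hRHSφ, ← ENNReal.toReal_mul]
    exact ENNReal.toReal_mono (ENNReal.mul_ne_top hBfin hFfin) hmain
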